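/- Let L₀ > 0, ε > 0, δ ∈ (0, L₀), and let h_ε(z) = ((z/L₀)^{1/3} − 1) / (ε(1+z/ε)^{1/3}). Define u_ε(x) = ∫ₓ^δ exp[−∫₀^z h_ε(z') dz'] dz / ∫₀^δ exp[−∫₀^z h_ε(z') dz'] dz for 0 ≤ x ≤ δ. Then u_ε solves the boundary value problem ε(1+x/ε)^{1/3} u'' + ((x/L₀)^{1/3} − 1) u' = 0 on (0,δ) with u_ε(δ) = 0 and u_ε(0) = 1, and for δ = L₀/2 and each fixed δ' < δ, u_ε converges uniformly to 1 on [0,δ'] as ε → 0. -/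

import Mathlib

/-!
With `f = exp (-∫₀ h)` the derivative of the scale function of the generator `u'' + h u'`,
the function `u = (∫ₓ^δ f) / (∫₀^δ f)` has `u' = -f / ∫₀^δ f` and `u'' = -h u'`; multiplying by
the diffusion coefficient `a` turns `u'' + h u' = 0` into `a u'' + b u' = 0` since `h = b / a`.

For the zero-noise limit, `h_ε ≤ 0` on `[0, L₀]`, so `f` is increasing there, and for
`δ' < δ'' < δ = L₀/2` we have `h_ε ≤ -κ_ε` on `[δ', δ'']` with `κ_ε → ∞`, because `h_ε` is
increasing and the diffusion coefficient `ε (1 + δ''/ε)^{1/3} = ε^{2/3} (ε + δ'')^{1/3}` tends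
to `0`. Hence
`1 - u(x) = ∫₀ˣ f / ∫₀^δ f ≤ δ' f(δ') / ((δ - δ'') f(δ'')) ≤ δ' / (δ - δ'') · exp (-κ_ε (δ'' - δ'))`
uniformly for `x ≤ δ'`.
-/

open Set Filter Topology MeasureTheory

noncomputable def scaleDensity (h : ℝ → ℝ) (z : ℝ) : ℝ :=
  Real.exp (-∫ t in (0:ℝ)..z, h t)

noncomputable def exitProb (h : ℝ → ℝ) (δ x : ℝ) : ℝ :=
  (∫ z in x..δ, scaleDensity h z) / ∫ z in (0:ℝ)..δ, scaleDensity h z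

section ScaleDensity

variable {h : ℝ → ℝ} {δ : ℝ}

lemma scaleDensity_pos (h : ℝ → ℝ) (z : ℝ) : 0 < scaleDensity h z := Real.exp_pos _

lemma ContinuousOn.intervalIntegrable_of_mem_Icc {f : ℝ → ℝ} {a b c d : ℝ}
    (hf : ContinuousOn f (Icc c d)) (ha : a ∈ Icc c d) (hb : b ∈ Icc c d) :
    IntervalIntegrable f volume a b :=
  (hf.mono (uIcc_subset_Icc ha hb)).intervalIntegrable

lemma continuousOn_scaleDensity (hh : ContinuousOn h (Icc 0 δ)) :
    ContinuousOn (scaleDensity h) (Icc 0 δ) := by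
  rcases le_or_gt 0 δ with hδ | hδ
  · rw [← uIcc_of_le hδ] at hh ⊢
    exact Real.continuous_exp.comp_continuousOn (intervalIntegral.continuousOn_primitive_interval
      (hh.integrableOn_compact isCompact_uIcc)).neg
  · simp [Icc_eq_empty_of_lt hδ]

lemma intervalIntegrable_scaleDensity (hh : ContinuousOn h (Icc 0 δ)) {a b : ℝ}
    (ha : a ∈ Icc 0 δ) (hb : b ∈ Icc 0 δ) :
    IntervalIntegrable (scaleDensity h) volume a b :=
  (continuousOn_scaleDensity hh).intervalIntegrable_of_mem_Icc ha hb

lemma integral_scaleDensity_pos (hh : ContinuousOn h (Icc 0 δ)) (hδ : 0 < δ) :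
    0 < ∫ z in (0:ℝ)..δ, scaleDensity h z :=
  intervalIntegral.intervalIntegral_pos_of_pos
    (intervalIntegrable_scaleDensity hh (left_mem_Icc.2 hδ.le) (right_mem_Icc.2 hδ.le))
    (scaleDensity_pos h) hδ

lemma scaleDensity_eq_mul_exp (hh : ContinuousOn h (Icc 0 δ)) {a b : ℝ}
    (ha : a ∈ Icc 0 δ) (hb : b ∈ Icc 0 δ) :
    scaleDensity h a = scaleDensity h b * Real.exp (∫ t in a..b, h t) := by
  have h0 : (0:ℝ) ∈ Icc 0 δ := ⟨le_rfl, ha.1.trans ha.2⟩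
  rw [← intervalIntegral.integral_interval_sub_left (hh.intervalIntegrable_of_mem_Icc h0 hb)
    (hh.intervalIntegrable_of_mem_Icc h0 ha), scaleDensity, scaleDensity, ← Real.exp_add]
  ring_nf

lemma scaleDensity_le_mul_exp (hh : ContinuousOn h (Icc 0 δ)) {a b κ : ℝ}
    (ha : a ∈ Icc 0 δ) (hb : b ∈ Icc 0 δ) (hab : a ≤ b) (hκ : ∀ t ∈ Icc a b, h t ≤ -κ) :
    scaleDensity h a ≤ scaleDensity h b * Real.exp (-(κ * (b - a))) := by
  rw [scaleDensity_eq_mul_exp hh ha hb]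
  refine mul_le_mul_of_nonneg_left (Real.exp_le_exp.2 ?_) (scaleDensity_pos h b).le
  have := intervalIntegral.integral_mono_on hab (hh.intervalIntegrable_of_mem_Icc ha hb)
    intervalIntegrable_const hκ
  rw [intervalIntegral.integral_const, smul_eq_mul] at this
  linarith

lemma monotoneOn_scaleDensity (hh : ContinuousOn h (Icc 0 δ))
    (hneg : ∀ t ∈ Icc 0 δ, h t ≤ 0) : MonotoneOn (scaleDensity h) (Icc 0 δ) := by
  intro a ha b hb hab
  simpa using scaleDensity_le_mul_exp (κ := 0) hh ha hb hab
    (fun t ht => by simpa using hneg t ⟨ha.1.trans ht.1, ht.2.trans hb.2⟩)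

lemma hasDerivAt_scaleDensity (hh : ContinuousOn h (Icc 0 δ)) {x : ℝ} (hx : x ∈ Ioo 0 δ) :
    HasDerivAt (scaleDensity h) (scaleDensity h x * -h x) x := by
  have hG : HasDerivAt (fun z => ∫ t in (0:ℝ)..z, h t) (h x) x :=
    intervalIntegral.integral_hasDerivAt_right
      (hh.intervalIntegrable_of_mem_Icc ⟨le_rfl, hx.1.le.trans hx.2.le⟩ (Ioo_subset_Icc_self hx))
      ((hh.mono Ioo_subset_Icc_self).stronglyMeasurableAtFilter isOpen_Ioo x hx)
      (hh.continuousAt (Icc_mem_nhds hx.1 hx.2))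
  exact hG.neg.exp

lemma exitProb_self (h : ℝ → ℝ) (δ : ℝ) : exitProb h δ δ = 0 := by
  simp [exitProb]

lemma exitProb_zero (hh : ContinuousOn h (Icc 0 δ)) (hδ : 0 < δ) : exitProb h δ 0 = 1 :=
  div_self (integral_scaleDensity_pos hh hδ).ne'

lemma hasDerivAt_exitProb (hh : ContinuousOn h (Icc 0 δ)) {x : ℝ} (hx : x ∈ Ioo 0 δ) :
    HasDerivAt (exitProb h δ) (-scaleDensity h x / ∫ z in (0:ℝ)..δ, scaleDensity h z) x := by
  have hf := continuousOn_scaleDensity hh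
  refine HasDerivAt.div_const (intervalIntegral.integral_hasDerivAt_left ?_
    ((hf.mono Ioo_subset_Icc_self).stronglyMeasurableAtFilter isOpen_Ioo x hx)
    (hf.continuousAt (Icc_mem_nhds hx.1 hx.2))) _
  exact intervalIntegrable_scaleDensity hh (Ioo_subset_Icc_self hx)
    (right_mem_Icc.2 (hx.1.trans hx.2).le)

lemma deriv_deriv_exitProb (hh : ContinuousOn h (Icc 0 δ)) {x : ℝ} (hx : x ∈ Ioo 0 δ) :
    deriv (deriv (exitProb h δ)) x = -h x * deriv (exitProb h δ) x := by
  have hderiv : deriv (exitProb h δ) =ᶠ[𝓝 x]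
      fun y => -scaleDensity h y / ∫ z in (0:ℝ)..δ, scaleDensity h z :=
    eventually_of_mem (isOpen_Ioo.mem_nhds hx) fun y hy => (hasDerivAt_exitProb hh hy).deriv
  have hderiv2 : HasDerivAt (fun y => -scaleDensity h y / ∫ z in (0:ℝ)..δ, scaleDensity h z)
      (-(scaleDensity h x * -h x) / ∫ z in (0:ℝ)..δ, scaleDensity h z) x :=
    (hasDerivAt_scaleDensity hh hx).neg.div_const _
  rw [hderiv.deriv_eq, hderiv2.deriv, (hasDerivAt_exitProb hh hx).deriv]
  ring

lemma one_sub_exitProb (hh : ContinuousOn h (Icc 0 δ)) (hδ : 0 < δ) {x : ℝ} (hx : x ∈ Icc 0 δ) :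
    1 - exitProb h δ x =
      (∫ z in (0:ℝ)..x, scaleDensity h z) / ∫ z in (0:ℝ)..δ, scaleDensity h z := by
  have hD := (integral_scaleDensity_pos hh hδ).ne'
  have h0 : (0:ℝ) ∈ Icc 0 δ := left_mem_Icc.2 hδ.le
  rw [exitProb, eq_div_iff hD, sub_mul, one_mul, div_mul_cancel₀ _ hD, sub_eq_iff_eq_add,
    intervalIntegral.integral_add_adjacent_intervals (intervalIntegrable_scaleDensity hh h0 hx)
      (intervalIntegrable_scaleDensity hh hx (right_mem_Icc.2 hδ.le))]

lemma integral_scaleDensity_le (hh : ContinuousOn h (Icc 0 δ)) (hneg : ∀ t ∈ Icc 0 δ, h t ≤ 0)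
    {x δ' : ℝ} (hx : x ∈ Icc 0 δ') (hδ' : δ' ≤ δ) :
    ∫ z in (0:ℝ)..x, scaleDensity h z ≤ δ' * scaleDensity h δ' := by
  have hδ'mem : δ' ∈ Icc 0 δ := ⟨hx.1.trans hx.2, hδ'⟩
  have hxmem : x ∈ Icc 0 δ := ⟨hx.1, hx.2.trans hδ'⟩
  calc ∫ z in (0:ℝ)..x, scaleDensity h z ≤ ∫ z in (0:ℝ)..x, scaleDensity h δ' :=
      intervalIntegral.integral_mono_on hx.1
        (intervalIntegrable_scaleDensity hh (left_mem_Icc.2 (hδ'mem.1.trans hδ')) hxmem)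
        intervalIntegrable_const fun t ht =>
          monotoneOn_scaleDensity hh hneg ⟨ht.1, ht.2.trans hxmem.2⟩ hδ'mem (ht.2.trans hx.2)
    _ ≤ δ' * scaleDensity h δ' := by
      rw [intervalIntegral.integral_const, smul_eq_mul, sub_zero]
      exact mul_le_mul_of_nonneg_right hx.2 (scaleDensity_pos h δ').le

lemma mul_scaleDensity_le_integral (hh : ContinuousOn h (Icc 0 δ))
    (hneg : ∀ t ∈ Icc 0 δ, h t ≤ 0) {δ'' : ℝ} (hδ'' : δ'' ∈ Icc 0 δ) :
    (δ - δ'') * scaleDensity h δ'' ≤ ∫ z in (0:ℝ)..δ, scaleDensity h z := by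
  have hδmem : δ ∈ Icc 0 δ := right_mem_Icc.2 (hδ''.1.trans hδ''.2)
  have h0mem : (0:ℝ) ∈ Icc 0 δ := left_mem_Icc.2 hδmem.1
  calc (δ - δ'') * scaleDensity h δ'' = ∫ z in δ''..δ, scaleDensity h δ'' := by
        rw [intervalIntegral.integral_const, smul_eq_mul]
    _ ≤ ∫ z in δ''..δ, scaleDensity h z :=
      intervalIntegral.integral_mono_on hδ''.2 intervalIntegrable_const
        (intervalIntegrable_scaleDensity hh hδ'' hδmem) fun t ht =>
          monotoneOn_scaleDensity hh hneg hδ'' ⟨hδ''.1.trans ht.1, ht.2⟩ ht.1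
    _ ≤ ∫ z in (0:ℝ)..δ, scaleDensity h z := by
      rw [← intervalIntegral.integral_add_adjacent_intervals
        (intervalIntegrable_scaleDensity hh h0mem hδ'')
        (intervalIntegrable_scaleDensity hh hδ'' hδmem)]
      exact le_add_of_nonneg_left (intervalIntegral.integral_nonneg hδ''.1
        fun t _ => (scaleDensity_pos h t).le)

lemma abs_one_sub_exitProb_le (hh : ContinuousOn h (Icc 0 δ)) (hneg : ∀ t ∈ Icc 0 δ, h t ≤ 0)
    {δ' δ'' κ x : ℝ} (hδ'' : δ' ≤ δ'') (hδ : δ'' < δ) (hκ : ∀ t ∈ Icc δ' δ'', h t ≤ -κ)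
    (hx : x ∈ Icc 0 δ') :
    |1 - exitProb h δ x| ≤ δ' / (δ - δ'') * Real.exp (-(κ * (δ'' - δ'))) := by
  have hδ'mem : δ' ∈ Icc 0 δ := ⟨hx.1.trans hx.2, by linarith⟩
  have hδ''mem : δ'' ∈ Icc 0 δ := ⟨hδ'mem.1.trans hδ'', hδ.le⟩
  have hδpos : 0 < δ := hδ''mem.1.trans_lt hδ
  have hfδ'' := scaleDensity_pos h δ''
  have hgap : 0 < δ - δ'' := sub_pos.2 hδ
  rw [one_sub_exitProb hh hδpos ⟨hx.1, hx.2.trans hδ'mem.2⟩, abs_of_nonneg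
    (div_nonneg (intervalIntegral.integral_nonneg hx.1 fun t _ => (scaleDensity_pos h t).le)
      (integral_scaleDensity_pos hh hδpos).le)]
  calc (∫ z in (0:ℝ)..x, scaleDensity h z) / ∫ z in (0:ℝ)..δ, scaleDensity h z
      ≤ δ' * scaleDensity h δ' / ((δ - δ'') * scaleDensity h δ'') :=
        div_le_div₀ (mul_nonneg hδ'mem.1 (scaleDensity_pos h δ').le)
          (integral_scaleDensity_le hh hneg hx hδ'mem.2) (mul_pos hgap hfδ'')
          (mul_scaleDensity_le_integral hh hneg hδ''mem)
    _ ≤ δ' * (scaleDensity h δ'' * Real.exp (-(κ * (δ'' - δ')))) /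
          ((δ - δ'') * scaleDensity h δ'') := by
        gcongr
        · exact hδ'mem.1
        · exact scaleDensity_le_mul_exp hh hδ'mem hδ''mem hδ'' hκ
    _ = δ' / (δ - δ'') * Real.exp (-(κ * (δ'' - δ'))) := by
        field_simp [hgap.ne', hfδ''.ne']

end ScaleDensity

theorem tendstoUniformlyOn_exitProb_one {ι : Type*} {l : Filter ι} {h : ι → ℝ → ℝ}
    {κ : ι → ℝ} {δ δ' δ'' : ℝ} (hδ'' : δ' < δ'') (hδ : δ'' < δ)
    (hh : ∀ᶠ i in l, ContinuousOn (h i) (Icc 0 δ))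
    (hneg : ∀ᶠ i in l, ∀ t ∈ Icc 0 δ, h i t ≤ 0)
    (hκ : ∀ᶠ i in l, ∀ t ∈ Icc δ' δ'', h i t ≤ -κ i) (hκ_top : Tendsto κ l atTop) :
    TendstoUniformlyOn (fun i => exitProb (h i) δ) (fun _ => 1) l (Icc 0 δ') := by
  have hbound : Tendsto (fun i => δ' / (δ - δ'') * Real.exp (-(κ i * (δ'' - δ')))) l (𝓝 0) := by
    simpa using ((Real.tendsto_exp_atBot.comp (tendsto_neg_atTop_atBot.comp
      (hκ_top.atTop_mul_const (sub_pos.2 hδ'')))).const_mul (δ' / (δ - δ'')))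
  refine Metric.tendstoUniformlyOn_iff.2 fun η hη => ?_
  filter_upwards [hh, hneg, hκ, hbound.eventually (gt_mem_nhds hη)]
    with i hhi hnegi hκi hboundi x hx
  rw [Real.dist_eq]
  exact (abs_one_sub_exitProb_le hhi hnegi hδ''.le hδ hκi hx).trans_lt hboundi

noncomputable def driftOverDiffusion (L0 ε t : ℝ) : ℝ :=
  ((t/L0) ^ ((1:ℝ)/3) - 1) / (ε * (1+t/ε) ^ ((1:ℝ)/3))

section DriftOverDiffusion

variable {L0 ε : ℝ}

lemma diffusionCoeff_pos (hε : 0 < ε) {t : ℝ} (ht : 0 ≤ t) : 0 < ε * (1+t/ε) ^ ((1:ℝ)/3) := by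
  positivity

lemma continuousOn_driftOverDiffusion (hε : 0 < ε) :
    ContinuousOn (driftOverDiffusion L0 ε) (Ici 0) := by
  have hcube : Continuous fun x : ℝ => x ^ ((1:ℝ)/3) := Real.continuous_rpow_const (by norm_num)
  refine ContinuousOn.div ?_ ?_ fun t ht => (diffusionCoeff_pos hε ht).ne'
  · exact ((hcube.comp (continuous_id.div_const L0)).sub continuous_const).continuousOn
  · exact (continuous_const.mul
      (hcube.comp (continuous_const.add (continuous_id.div_const ε)))).continuousOn

lemma monotoneOn_driftOverDiffusion (hL0 : 0 < L0) (hε : 0 < ε) :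
    MonotoneOn (driftOverDiffusion L0 ε) (Icc 0 L0) := by
  intro s hs t ht hst
  have hPs := diffusionCoeff_pos hε hs.1
  have hP : ε * (1+s/ε) ^ ((1:ℝ)/3) ≤ ε * (1+t/ε) ^ ((1:ℝ)/3) :=
    mul_le_mul_of_nonneg_left (Real.rpow_le_rpow (by have := div_nonneg hs.1 hε.le; linarith)
      (by gcongr) (by norm_num)) hε.le
  have hN : (s/L0) ^ ((1:ℝ)/3) ≤ (t/L0) ^ ((1:ℝ)/3) :=
    Real.rpow_le_rpow (div_nonneg hs.1 hL0.le) (by gcongr) (by norm_num)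
  have hNs : (s/L0) ^ ((1:ℝ)/3) ≤ 1 :=
    Real.rpow_le_one (div_nonneg hs.1 hL0.le) ((div_le_one hL0).2 hs.2) (by norm_num)
  calc driftOverDiffusion L0 ε s ≤ ((s/L0) ^ ((1:ℝ)/3) - 1) / (ε * (1+t/ε) ^ ((1:ℝ)/3)) := by
        have := div_le_div_of_nonneg_left (sub_nonneg.2 hNs) hPs hP
        rw [← neg_sub, neg_div, neg_div] at this
        unfold driftOverDiffusion
        linarith
    _ ≤ driftOverDiffusion L0 ε t :=
        div_le_div_of_nonneg_right (by linarith) (diffusionCoeff_pos hε ht.1).le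

lemma driftOverDiffusion_nonpos (hL0 : 0 < L0) (hε : 0 < ε) {t : ℝ} (ht : t ∈ Icc 0 L0) :
    driftOverDiffusion L0 ε t ≤ 0 :=
  (monotoneOn_driftOverDiffusion hL0 hε ht (right_mem_Icc.2 hL0.le) ht.2).trans_eq
    (by simp [driftOverDiffusion, hL0.ne'])

lemma tendsto_diffusionCoeff_nhdsGT_zero {s : ℝ} (hs : 0 ≤ s) :
    Tendsto (fun ε : ℝ => ε * (1+s/ε) ^ ((1:ℝ)/3)) (𝓝[>] 0) (𝓝[>] 0) := by
  have hfactor : ∀ ε : ℝ, 0 < ε →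
      ε * (1+s/ε) ^ ((1:ℝ)/3) = ε ^ ((2:ℝ)/3) * (ε + s) ^ ((1:ℝ)/3) := fun ε hε => by
    rw [show 1 + s/ε = (ε + s)/ε by field_simp, Real.div_rpow (by positivity) hε.le,
      show (2:ℝ)/3 = 1 - 1/3 by norm_num, Real.rpow_sub hε, Real.rpow_one]
    ring
  have hcont : ContinuousAt (fun ε : ℝ => ε ^ ((2:ℝ)/3) * (ε + s) ^ ((1:ℝ)/3)) 0 :=
    (Real.continuousAt_rpow_const 0 _ (Or.inr (by norm_num))).mul
      ((continuous_add_const s).continuousAt.rpow_const (Or.inr (by norm_num)))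
  refine tendsto_nhdsWithin_iff.2 ⟨?_, ?_⟩
  · have hlim : Tendsto (fun ε : ℝ => ε ^ ((2:ℝ)/3) * (ε + s) ^ ((1:ℝ)/3)) (𝓝 0) (𝓝 0) := by
      simpa using hcont.tendsto
    refine (hlim.mono_left nhdsWithin_le_nhds).congr' ?_
    filter_upwards [self_mem_nhdsWithin] with ε hε using (hfactor ε hε).symm
  · filter_upwards [self_mem_nhdsWithin] with ε hε using diffusionCoeff_pos hε hs

lemma tendsto_neg_driftOverDiffusion_atTop (hL0 : 0 < L0) {t : ℝ} (ht : t ∈ Ico 0 L0) :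
    Tendsto (fun ε => -driftOverDiffusion L0 ε t) (𝓝[>] 0) atTop := by
  have hgap : 0 < 1 - (t/L0) ^ ((1:ℝ)/3) := sub_pos.2 <|
    Real.rpow_lt_one (div_nonneg ht.1 hL0.le) ((div_lt_one hL0).2 ht.2) (by norm_num)
  refine ((tendsto_inv_nhdsGT_zero.comp (tendsto_diffusionCoeff_nhdsGT_zero ht.1)).const_mul_atTop
    hgap).congr fun ε => ?_
  simp only [Function.comp_apply, driftOverDiffusion]
  ring

end DriftOverDiffusion

theorem stmt_5 (L0 : ℝ) (hL0 : 0 < L0)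
    (u : ℝ → ℝ → ℝ → ℝ)
    (hu : ∀ ε δ x, u ε δ x =
      (∫ z in x..δ, Real.exp (-(∫ t in (0:ℝ)..z,
          ((t/L0) ^ ((1:ℝ)/3) - 1) / (ε * (1+t/ε) ^ ((1:ℝ)/3))))) /
      (∫ z in (0:ℝ)..δ, Real.exp (-(∫ t in (0:ℝ)..z,
          ((t/L0) ^ ((1:ℝ)/3) - 1) / (ε * (1+t/ε) ^ ((1:ℝ)/3)))))) :
    (∀ ε > (0:ℝ), ∀ δ ∈ Ioo (0:ℝ) L0,
      u ε δ δ = 0 ∧ u ε δ 0 = 1 ∧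
      ∀ x ∈ Ioo (0:ℝ) δ,
        ε * (1+x/ε) ^ ((1:ℝ)/3) * deriv (deriv (u ε δ)) x
          + ((x/L0) ^ ((1:ℝ)/3) - 1) * deriv (u ε δ) x = 0) ∧
    (∀ δ' ∈ Ico (0:ℝ) (L0/2),
      TendstoUniformlyOn (fun ε x => u ε (L0/2) x) (fun _ => 1)
        (nhdsWithin 0 (Ioi 0)) (Icc 0 δ')) := by
  obtain rfl : u = fun ε => exitProb (driftOverDiffusion L0 ε) := by
    funext ε δ x
    exact hu ε δ x
  have hcont : ∀ ε > (0:ℝ), ∀ δ, ContinuousOn (driftOverDiffusion L0 ε) (Icc 0 δ) := fun ε hε δ =>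
    (continuousOn_driftOverDiffusion hε).mono Icc_subset_Ici_self
  refine ⟨fun ε hε δ hδ => ⟨exitProb_self _ _, exitProb_zero (hcont ε hε δ) hδ.1, fun x hx => ?_⟩,
    fun δ' hδ' => ?_⟩
  · have hratio : ε * (1+x/ε) ^ ((1:ℝ)/3) * driftOverDiffusion L0 ε x = (x/L0) ^ ((1:ℝ)/3) - 1 :=
      mul_div_cancel₀ _ (diffusionCoeff_pos hε hx.1.le).ne'
    rw [deriv_deriv_exitProb (hcont ε hε δ) hx]
    linear_combination (-deriv (exitProb (driftOverDiffusion L0 ε) δ) x) * hratio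
  · obtain ⟨δ'', hδ'', hδ⟩ := exists_between hδ'.2
    have hpos : ∀ᶠ ε in 𝓝[>] (0:ℝ), 0 < ε := self_mem_nhdsWithin
    refine tendstoUniformlyOn_exitProb_one hδ'' hδ (hpos.mono fun ε hε => hcont ε hε _)
      (hpos.mono fun ε hε t ht => driftOverDiffusion_nonpos hL0 hε ⟨ht.1, by linarith [ht.2]⟩)
      (hpos.mono fun ε hε t ht => ?_)
      (tendsto_neg_driftOverDiffusion_atTop hL0 ⟨by linarith [hδ'.1], by linarith⟩)
    rw [neg_neg]
    exact monotoneOn_driftOverDiffusion hL0 hε ⟨hδ'.1.trans ht.1, by linarith [ht.2]⟩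
      ⟨by linarith [hδ'.1], by linarith⟩ ht.2
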